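/- Let X be a Banach space over ℝ or ℂ, let L : X →L[𝕜] X and P : X →L[𝕜] X be continuous linear operators, and set Q = id − P. Then for every t ≥ 0, the Mori–Zwanzig decomposition holds as an operator identity: exp(t•L) ∘ L = exp(t•L) ∘ P ∘ L + ∫_0^t exp((t−s)•L) ∘ P ∘ L ∘ exp(s•(Q ∘ L)) ∘ Q ∘ L ds + exp(t•(Q ∘ L)) ∘ Q ∘ L, where the integral is the Bochner integral of the operator-valued integrand. -/

import Mathlib

/-!
Differentiating `s ↦ exp((t-s)•A) * exp(s•B)` gives Duhamel's formula
`exp(t•A) = exp(t•B) + ∫₀ᵗ exp((t-s)•A) (A - B) exp(s•B) ds`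
in any real Banach algebra.
With `A = L`, `B = QL` (so `A - B = PL`), multiplying on the right by `QL` and adding
`exp(t•L) PL` yields the decomposition, because `exp(t•L) L = exp(t•L) PL + exp(t•L) QL`.
-/

open NormedSpace MeasureTheory

section BanachAlgebra

variable {𝔸 : Type*} [NormedRing 𝔸] [NormedAlgebra ℝ 𝔸] [CompleteSpace 𝔸]

@[fun_prop]
theorem continuous_exp_of_real_algebra : Continuous (exp : 𝔸 → 𝔸) :=
  continuous_iff_continuousAt.2 fun x => (exp_analytic (𝕂 := ℝ) x).continuousAt

theorem hasDerivAt_exp_smul_mul_exp_smul (A B : 𝔸) (t s : ℝ) :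
    HasDerivAt (fun u : ℝ => exp ((t - u) • A) * exp (u • B))
      (exp ((t - s) • A) * (B - A) * exp (s • B)) s := by
  have hA : HasDerivAt (fun u : ℝ => exp ((t - u) • A)) (-(A * exp ((t - s) • A))) s := by
    simpa [Function.comp_def] using
      (hasDerivAt_exp_smul_const' A (t - s)).scomp s ((hasDerivAt_id s).const_sub t)
  have hcomm : A * exp ((t - s) • A) = exp ((t - s) • A) * A :=
    ((Commute.refl A).smul_right (t - s)).exp_right
  refine (hA.mul (hasDerivAt_exp_smul_const' B s)).congr_deriv ?_
  rw [hcomm, mul_sub, sub_mul, mul_assoc, mul_assoc, neg_mul, mul_assoc]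
  abel

theorem exp_smul_eq_exp_smul_add_integral (A B : 𝔸) (t : ℝ) :
    exp (t • A) =
      exp (t • B) + ∫ s in (0:ℝ)..t, exp ((t - s) • A) * (A - B) * exp (s • B) := by
  have hcont : Continuous fun s : ℝ => exp ((t - s) • A) * (B - A) * exp (s • B) := by
    fun_prop
  have hFTC := intervalIntegral.integral_eq_sub_of_hasDerivAt
    (fun s _ => hasDerivAt_exp_smul_mul_exp_smul A B t s) (hcont.intervalIntegrable 0 t)
  simp only [sub_zero, zero_smul, exp_zero, mul_one, sub_self, one_mul] at hFTC
  rw [← neg_sub B A]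
  simp only [mul_neg, neg_mul, intervalIntegral.integral_neg, hFTC]
  abel

theorem intervalIntegral.integral_mul_const_of_intervalIntegrable {f : ℝ → 𝔸} {a b : ℝ}
    (hf : IntervalIntegrable f volume a b) (c : 𝔸) :
    ∫ s in a..b, f s * c = (∫ s in a..b, f s) * c :=
  ((ContinuousLinearMap.mul ℝ 𝔸).flip c).intervalIntegral_comp_comm hf

theorem exp_smul_mul_eq_mori_zwanzig (L P Q : 𝔸) (hPQ : P + Q = 1) (t : ℝ) :
    exp (t • L) * L = exp (t • L) * (P * L)
      + (∫ s in (0:ℝ)..t, exp ((t - s) • L) * (P * L) * exp (s • (Q * L)) * (Q * L))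
      + exp (t • (Q * L)) * (Q * L) := by
  have hL : L = P * L + Q * L := by rw [← add_mul, hPQ, one_mul]
  have hDuhamel := exp_smul_eq_exp_smul_add_integral L (Q * L) t
  rw [show L - Q * L = P * L by nth_rewrite 1 [hL]; abel] at hDuhamel
  have hcont : Continuous fun s : ℝ => exp ((t - s) • L) * (P * L) * exp (s • (Q * L)) := by
    fun_prop
  calc exp (t • L) * L = exp (t • L) * (P * L) + exp (t • L) * (Q * L) := by
        rw [← mul_add, ← hL]
    _ = _ := by
        rw [intervalIntegral.integral_mul_const_of_intervalIntegrable
          (hcont.intervalIntegrable 0 t), add_assoc, ← add_mul, add_comm _ (exp _),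
          ← hDuhamel]

end BanachAlgebra

theorem mori_zwanzig_decomposition_general {𝕜 : Type*} [RCLike 𝕜] {X : Type*}
    [NormedAddCommGroup X] [NormedSpace 𝕜 X] [NormedSpace ℝ X]
    [IsScalarTower ℝ 𝕜 X] [SMulCommClass 𝕜 ℝ X] [CompleteSpace X]
    (L P : X →L[𝕜] X) (Q : X →L[𝕜] X)
    (hQ : Q = ContinuousLinearMap.id 𝕜 X - P)
    (t : ℝ) :
    (NormedSpace.exp (t • L)).comp L =
      (NormedSpace.exp (t • L)).comp (P.comp L) +
        (∫ s in (0:ℝ)..t,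
          (NormedSpace.exp ((t - s) • L)).comp
            (P.comp (L.comp ((NormedSpace.exp (s • (Q.comp L))).comp
              (Q.comp L))))) +
        (NormedSpace.exp (t • (Q.comp L))).comp (Q.comp L) := by
  let _ : NormedAlgebra ℝ (X →L[𝕜] X) := { norm_smul_le := norm_smul_le }
  have hPQ : P + Q = 1 := by rw [hQ, add_sub_cancel]; rfl
  simpa only [← ContinuousLinearMap.mul_def, mul_assoc] using
    exp_smul_mul_eq_mori_zwanzig L P Q hPQ t

/-- **Mori–Zwanzig decomposition** as an operator identity. For continuous linear operators
`L`, `P` on a Banach space `X` over `ℝ` or `ℂ`, with `Q = id - P`, and every `t ≥ 0`: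
`exp(t•L) ∘ L = exp(t•L) ∘ P ∘ L
  + ∫_0^t exp((t−s)•L) ∘ P ∘ L ∘ exp(s•(Q∘L)) ∘ Q ∘ L ds + exp(t•(Q∘L)) ∘ Q ∘ L`. -/
theorem mori_zwanzig_decomposition {𝕜 : Type*} [RCLike 𝕜] {X : Type*}
    [NormedAddCommGroup X] [NormedSpace 𝕜 X] [NormedSpace ℝ X]
    [IsScalarTower ℝ 𝕜 X] [SMulCommClass 𝕜 ℝ X] [CompleteSpace X]
    (L P : X →L[𝕜] X) (Q : X →L[𝕜] X)
    (hQ : Q = ContinuousLinearMap.id 𝕜 X - P)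
    (t : ℝ) (ht : 0 ≤ t) :
    (NormedSpace.exp (t • L)).comp L =
      (NormedSpace.exp (t • L)).comp (P.comp L) +
        (∫ s in (0:ℝ)..t,
          (NormedSpace.exp ((t - s) • L)).comp
            (P.comp (L.comp ((NormedSpace.exp (s • (Q.comp L))).comp
              (Q.comp L))))) +
        (NormedSpace.exp (t • (Q.comp L))).comp (Q.comp L) :=
  mori_zwanzig_decomposition_general L P Q hQ t
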